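/- Let $F$ be a nonempty closed subset of the unit sphere $\mathbb{S}_n$, let $0 < r < 1$, and set $W_F = \bigcup_{0 < t < 1} \bigcup_{\zeta \in F} E(t\zeta, r)$. Then the intersection of the Euclidean closure of $W_F$ with $\mathbb{S}_n$ is exactly $F$. -/

import Mathlib

noncomputable section
open MeasureTheory Filter Topology Metric

/-- `ℂⁿ` as a Euclidean space. -/
abbrev Cn (n : ℕ) := EuclideanSpace ℂ (Fin n)

/-- The open unit ball `𝔹ₙ`. -/
def Bn (n : ℕ) : Set (Cn n) := Metric.ball 0 1

/-- The unit sphere `𝕊ₙ`. -/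
def Sn (n : ℕ) : Set (Cn n) := Metric.sphere 0 1

/-- The inner product with the paper's convention: `⟨z,w⟩ = Σ zᵢ conj wᵢ`,
linear in the first variable. -/
def pip (n : ℕ) (z w : Cn n) : ℂ := inner ℂ w z

instance CnMeasurableSpace (n : ℕ) : MeasurableSpace (Cn n) := borel _
instance CnBorelSpace (n : ℕ) : BorelSpace (Cn n) := ⟨rfl⟩

open scoped Classical in
/-- The Möbius automorphism `φ_a` of the unit ball interchanging `0` and `a`
(for `a = 0` it is `z ↦ -z`). -/
def mobius (n : ℕ) (a z : Cn n) : Cn n :=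
  if a = 0 then -z else
    (1 - pip n z a)⁻¹ •
      ((a - (pip n z a / pip n a a) • a)
        - ((Real.sqrt (1 - ‖a‖^2) : ℝ) : ℂ) • (z - (pip n z a / pip n a a) • a))

/-- The pseudo-hyperbolic metric `ρ(z,w) = |φ_z(w)|`. -/
def prho (n : ℕ) (z w : Cn n) : ℝ := ‖mobius n z w‖

/-- The pseudo-hyperbolic ball `E(a,r) = {z ∈ 𝔹ₙ : ρ(z,a) < r}`. -/
def pE (n : ℕ) (a : Cn n) (r : ℝ) : Set (Cn n) := {z ∈ Bn n | prho n z a < r}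

/-- The normalized Lebesgue measure on the unit ball (`ν(𝔹ₙ) = 1`). -/
def nu (n : ℕ) : Measure (Cn n) := (volume (Bn n))⁻¹ • volume.restrict (Bn n)

/-- The normalized reproducing kernel `k_z`. -/
def kfun (n : ℕ) (z : Cn n) : Cn n → ℂ :=
  fun w => (((1 - ‖z‖^2) ^ (((n : ℝ) + 1)/2) : ℝ) : ℂ) * ((1 - pip n w z)⁻¹) ^ (n + 1)

/-- The function-level action of the unitary `U_a : f ↦ (f ∘ φ_a)·k_a`. -/
def Ufun (n : ℕ) (a : Cn n) (f : Cn n → ℂ) : Cn n → ℂ :=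
  fun w => f (mobius n a w) * kfun n a w

/-- The function-level Toeplitz operator `T_f` given by its integral formula. -/
def Tfun (n : ℕ) (f h : Cn n → ℂ) : Cn n → ℂ :=
  fun z => ∫ w, f w * h w * ((1 - pip n z w)⁻¹) ^ (n + 1) ∂(nu n)

/-- The `L²` inner product with the paper's convention `⟨f,g⟩ = ∫ f ·conj g dν`. -/
def L2inner (n : ℕ) (f g : Cn n → ℂ) : ℂ :=
  ∫ w, f w * (starRingEnd ℂ) (g w) ∂(nu n)

/-- The Bergman space `L²_a`, as the submodule of `L²(𝔹ₙ, ν)` of elements having a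
holomorphic representative. -/
def bergman (n : ℕ) : Submodule ℂ (Lp ℂ 2 (nu n)) where
  carrier := {f | ∃ g : Cn n → ℂ, DifferentiableOn ℂ g (Bn n) ∧ ⇑f =ᵐ[nu n] g}
  zero_mem' := ⟨0, differentiableOn_const 0, Lp.coeFn_zero ℂ 2 (nu n)⟩
  add_mem' := by
    rintro f₁ f₂ ⟨g₁, hg₁, he₁⟩ ⟨g₂, hg₂, he₂⟩
    exact ⟨g₁ + g₂, hg₁.add hg₂, (Lp.coeFn_add f₁ f₂).trans (he₁.add he₂)⟩
  smul_mem' := by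
    rintro c f ⟨g, hg, he⟩
    exact ⟨c • g, hg.const_smul c, (Lp.coeFn_smul c f).trans (he.const_smul c)⟩

/-! Rudin's identity `|1 - ⟨a, z⟩|² (1 - |φ_z(a)|²) = (1 - |z|²)(1 - |a|²)` shows that a point
`z ∈ E(tξ, r)` has `|1 - ⟨z, tξ⟩| ≲ 1 - |z|`; since `|ζ - ξ|² = 2 Re (1 - ⟨ζ, ξ⟩)` on the sphere,
this gives `|ζ - ξ|² ≲ |ζ - z|` for every `ζ ∈ 𝕊ₙ`. Hence a point of `𝕊ₙ` in the closure of
`W_F` has distance `0` from the closed set `F`. Conversely `tζ ∈ E(tζ, r)` tends to `ζ` as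
`t → 1`. -/

section PseudoHyperbolic

variable {n : ℕ}

lemma pip_self (b : Cn n) : pip n b b = ((‖b‖ ^ 2 : ℝ) : ℂ) := by
  rw [pip, inner_self_eq_norm_sq_to_K]; push_cast; rfl

lemma norm_pip_le (z w : Cn n) : ‖pip n z w‖ ≤ ‖z‖ * ‖w‖ := by
  rw [pip, mul_comm]; exact norm_inner_le_norm w z

lemma mobius_self (a : Cn n) : mobius n a a = 0 := by
  by_cases ha : a = 0
  · simp [mobius, ha]
  · have : pip n a a ≠ 0 := by
      rw [pip_self]; exact_mod_cast (pow_pos (norm_pos_iff.2 ha) 2).ne'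
    simp [mobius, ha, div_self this]

lemma norm_sq_mobius_numerator {b : Cn n} (hb0 : b ≠ 0) (hb : ‖b‖ ≤ 1) (w : Cn n) :
    ‖(b - (pip n w b / pip n b b) • b)
        - ((√(1 - ‖b‖ ^ 2) : ℝ) : ℂ) • (w - (pip n w b / pip n b b) • b)‖ ^ 2
      = ‖1 - pip n w b‖ ^ 2 - (1 - ‖b‖ ^ 2) * (1 - ‖w‖ ^ 2) := by
  set c := pip n w b with hc
  set A := ‖b‖ ^ 2 with hA
  have hA0 : 0 < A := by positivity
  have hAC : (A : ℂ) ≠ 0 := by exact_mod_cast hA0.ne'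
  have hs : √(1 - A) ^ 2 = 1 - A := Real.sq_sqrt (by nlinarith [norm_nonneg b])
  rw [pip_self, ← hA]
  set P := (c / (A : ℂ)) • b
  have hbP : b - P = (1 - c / A) • b := by rw [sub_smul, one_smul]
  have horth : inner ℂ b (w - P) = 0 := by
    rw [inner_sub_right, inner_smul_right, ← pip, ← pip, ← hc, pip_self, ← hA,
      div_mul_cancel₀ _ hAC, sub_self]
  have hP : ‖P‖ ^ 2 = ‖c‖ ^ 2 / A := by
    rw [norm_smul, norm_div, Complex.norm_real, Real.norm_of_nonneg hA0.le, hA]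
    field_simp
  have hwP : ‖w - P‖ ^ 2 = ‖w‖ ^ 2 - ‖c‖ ^ 2 / A := by
    have hPw : inner ℂ (w - P) P = 0 := by
      rw [inner_smul_right, ← inner_conj_symm, horth, map_zero, mul_zero]
    have := norm_add_sq_eq_norm_sq_add_norm_sq_of_inner_eq_zero _ _ hPw
    rw [sub_add_cancel, ← sq, ← sq, ← sq, hP] at this
    linarith
  have hcross : inner ℂ (b - P) (((√(1 - A) : ℝ) : ℂ) • (w - P)) = 0 := by
    rw [hbP, inner_smul_left, inner_smul_right, horth, mul_zero, mul_zero]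
  rw [norm_sub_sq (𝕜 := ℂ), hcross, map_zero, mul_zero, sub_zero, hbP, norm_smul, norm_smul,
    mul_pow, mul_pow, hwP, Complex.norm_real, Real.norm_eq_abs, sq_abs, hs, ← hA]
  have hsub : 1 - c / A = (A - c) / A := by field_simp
  rw [hsub, norm_div, div_pow, Complex.norm_real, Real.norm_of_nonneg hA0.le]
  simp only [Complex.sq_norm, Complex.normSq_apply, Complex.sub_re, Complex.sub_im,
    Complex.one_re, Complex.one_im, Complex.ofReal_re, Complex.ofReal_im]
  field_simp
  ring

lemma norm_one_sub_pip_sq_mul_one_sub_prho_sq {b w : Cn n} (hb : ‖b‖ < 1) (hw : ‖w‖ ≤ 1) :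
    ‖1 - pip n w b‖ ^ 2 * (1 - prho n b w ^ 2) = (1 - ‖b‖ ^ 2) * (1 - ‖w‖ ^ 2) := by
  rcases eq_or_ne b 0 with rfl | hb0
  · simp [prho, mobius, pip]
  have hc : ‖1 - pip n w b‖ ≠ 0 := by
    refine (lt_of_lt_of_le ?_ (norm_sub_norm_le 1 _)).ne'
    have := norm_pip_le w b
    rw [norm_one]
    nlinarith [norm_nonneg w, norm_nonneg b]
  rw [prho, mobius, if_neg hb0, norm_smul, mul_pow, norm_inv, inv_pow,
    norm_sq_mobius_numerator hb0 hb.le]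
  field_simp
  ring

lemma one_sub_norm_le_norm_one_sub_pip {z : Cn n} (hz : ‖z‖ ≤ 1) (a : Cn n) :
    1 - ‖a‖ ≤ ‖1 - pip n z a‖ := by
  have := norm_pip_le z a
  have := norm_sub_norm_le (1 : ℂ) (pip n z a)
  rw [norm_one] at this
  nlinarith [norm_nonneg a]

lemma norm_one_sub_pip_comm (z w : Cn n) : ‖1 - pip n w z‖ = ‖1 - pip n z w‖ := by
  rw [← Complex.norm_conj, map_sub, map_one, pip, pip, inner_conj_symm]

lemma self_mem_pE {a : Cn n} {r : ℝ} (ha : ‖a‖ < 1) (hr : 0 < r) : a ∈ pE n a r :=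
  ⟨mem_ball_zero_iff.2 ha, by simpa [prho, mobius_self] using hr⟩

lemma mul_norm_one_sub_pip_le_of_mem_pE {a z : Cn n} {r : ℝ} (ha : ‖a‖ < 1)
    (hz : z ∈ pE n a r) : (1 - r ^ 2) * ‖1 - pip n z a‖ ≤ 4 * (1 - ‖z‖) := by
  obtain ⟨hzB, hρ⟩ := hz
  have hz1 : ‖z‖ < 1 := mem_ball_zero_iff.1 hzB
  have hid := norm_one_sub_pip_sq_mul_one_sub_prho_sq hz1 ha.le
  rw [norm_one_sub_pip_comm] at hid
  set X := ‖1 - pip n z a‖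
  have hXa : 1 - ‖a‖ ≤ X := one_sub_norm_le_norm_one_sub_pip hz1.le a
  have hρ2 : prho n z a ^ 2 ≤ r ^ 2 := pow_le_pow_left₀ (norm_nonneg _) hρ.le 2
  have hbound : (1 - ‖z‖ ^ 2) * (1 - ‖a‖ ^ 2) ≤ 4 * (1 - ‖z‖) * X := by
    have hz0 := norm_nonneg z
    have ha0 := norm_nonneg a
    have hprod : (1 + ‖z‖) * (1 + ‖a‖) ≤ 4 := by nlinarith
    nlinarith [mul_nonneg (sub_nonneg.2 hz1.le) (sub_nonneg.2 ha.le),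
      mul_nonneg (sub_nonneg.2 hz1.le) (sub_nonneg.2 hXa)]
  have hX0 : 0 < X := by linarith
  have hsq : (1 - r ^ 2) * X * X ≤ 4 * (1 - ‖z‖) * X :=
    calc (1 - r ^ 2) * X * X ≤ X ^ 2 * (1 - prho n z a ^ 2) := by
          nlinarith [mul_le_mul_of_nonneg_left hρ2 (sq_nonneg X)]
      _ = (1 - ‖z‖ ^ 2) * (1 - ‖a‖ ^ 2) := hid
      _ ≤ 4 * (1 - ‖z‖) * X := hbound
  exact le_of_mul_le_mul_right hsq hX0

lemma sq_norm_sub_eq_two_mul_re_one_sub_pip {ζ ξ : Cn n} (hζ : ‖ζ‖ = 1) (hξ : ‖ξ‖ = 1) :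
    ‖ζ - ξ‖ ^ 2 = 2 * (1 - pip n ζ ξ).re := by
  rw [norm_sub_sq (𝕜 := ℂ), hζ, hξ, pip, ← inner_conj_symm, RCLike.conj_re, Complex.sub_re,
    Complex.one_re]
  simp only [RCLike.re_to_complex]
  ring

lemma mul_sq_norm_sub_le_of_mem_pE {ξ ζ z : Cn n} {r t : ℝ} (hr1 : r < 1) (ht0 : 0 ≤ t)
    (ht1 : t < 1) (hξ : ‖ξ‖ = 1) (hζ : ‖ζ‖ = 1) (hz : z ∈ pE n (t • ξ) r) :
    (1 - r ^ 2) * ‖ζ - ξ‖ ^ 2 ≤ 18 * ‖ζ - z‖ := by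
  have hta : ‖t • ξ‖ = t := by rw [norm_smul, hξ, Real.norm_of_nonneg ht0, mul_one]
  have hr0 : 0 ≤ r := (norm_nonneg _).trans hz.2.le
  set d := ‖ζ - z‖
  have hzd : 1 - ‖z‖ ≤ d := by
    have := norm_sub_norm_le ζ z
    rwa [hζ] at this
  have hX := mul_norm_one_sub_pip_le_of_mem_pE (by rwa [hta]) hz
  have hXt : 1 - t ≤ ‖1 - pip n z (t • ξ)‖ := by
    simpa [hta] using one_sub_norm_le_norm_one_sub_pip (mem_ball_zero_iff.1 hz.1).le (t • ξ)
  have hmove : ‖pip n z (t • ξ) - pip n ζ (t • ξ)‖ ≤ d := by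
    rw [pip, pip, ← inner_sub_right, ← pip]
    calc ‖pip n (z - ζ) (t • ξ)‖ ≤ ‖z - ζ‖ * ‖t • ξ‖ := norm_pip_le _ _
      _ ≤ d := by rw [hta, norm_sub_rev]; nlinarith [norm_nonneg (ζ - z)]
  have hradial : ‖pip n ζ (t • ξ) - pip n ζ ξ‖ ≤ 1 - t := by
    rw [pip, pip, ← inner_sub_left, ← pip]
    calc ‖pip n ζ (t • ξ - ξ)‖ ≤ ‖ζ‖ * ‖t • ξ - ξ‖ := norm_pip_le _ _
      _ = 1 - t := by
        rw [hζ, one_mul, show t • ξ - ξ = (t - 1) • ξ by rw [sub_smul, one_smul], norm_smul, hξ,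
          mul_one, Real.norm_of_nonpos (by linarith), neg_sub]
  have htri : ‖1 - pip n ζ ξ‖ ≤
      ‖1 - pip n z (t • ξ)‖ + ‖pip n z (t • ξ) - pip n ζ (t • ξ)‖
        + ‖pip n ζ (t • ξ) - pip n ζ ξ‖ := by
    refine (norm_sub_le_norm_sub_add_norm_sub _ (pip n ζ (t • ξ)) _).trans ?_
    gcongr
    exact norm_sub_le_norm_sub_add_norm_sub _ _ _
  have hs0 : 0 ≤ 1 - r ^ 2 := by nlinarith
  have hY : (1 - r ^ 2) * ‖1 - pip n ζ ξ‖ ≤ 9 * d := by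
    nlinarith [mul_le_mul_of_nonneg_left htri hs0, mul_le_mul_of_nonneg_left hXt hs0,
      mul_le_mul_of_nonneg_left hmove hs0, sq_nonneg r, norm_nonneg (ζ - z)]
  rw [sq_norm_sub_eq_two_mul_re_one_sub_pip hζ hξ]
  nlinarith [mul_le_mul_of_nonneg_left (Complex.re_le_norm (1 - pip n ζ ξ)) hs0]

def radialUnion (n : ℕ) (F : Set (Cn n)) (r : ℝ) : Set (Cn n) :=
  ⋃ t ∈ Set.Ioo (0 : ℝ) 1, ⋃ ζ ∈ F, pE n (t • ζ) r

lemma mem_closure_radialUnion {F : Set (Cn n)} {r : ℝ} (hr : 0 < r) {ζ : Cn n} (hζF : ζ ∈ F)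
    (hζ : ‖ζ‖ = 1) : ζ ∈ closure (radialUnion n F r) := by
  refine mem_closure_of_tendsto (f := fun t : ℝ => t • ζ) (b := 𝓝[<] 1) ?_ ?_
  · exact ((continuous_id.smul continuous_const : Continuous fun t : ℝ => t • ζ).tendsto' 1 ζ
      (one_smul ℝ ζ)).mono_left nhdsWithin_le_nhds
  · filter_upwards [Ioo_mem_nhdsLT one_pos] with t ht
    refine Set.mem_biUnion ht (Set.mem_biUnion hζF (self_mem_pE ?_ hr))
    rw [norm_smul, hζ, Real.norm_of_nonneg ht.1.le, mul_one]
    exact ht.2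

lemma mul_sq_infDist_le_of_mem_closure_radialUnion {F : Set (Cn n)} {r : ℝ} (hr1 : r < 1)
    (hFS : F ⊆ Sn n) {ζ z : Cn n} (hζ : ‖ζ‖ = 1) (hz : z ∈ closure (radialUnion n F r)) :
    (1 - r ^ 2) * infDist ζ F ^ 2 ≤ 18 * dist ζ z := by
  refine closure_minimal (fun z hz ↦ ?_) (isClosed_le continuous_const
    (continuous_const.mul (continuous_const.dist continuous_id))) hz
  simp only [radialUnion, Set.mem_iUnion] at hz
  obtain ⟨t, ht, ξ, hξ, hz⟩ := hz
  have hξ1 : ‖ξ‖ = 1 := mem_sphere_zero_iff_norm.mp (hFS hξ)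
  calc (1 - r ^ 2) * infDist ζ F ^ 2 ≤ (1 - r ^ 2) * ‖ζ - ξ‖ ^ 2 := by
        have : 0 ≤ 1 - r ^ 2 := by nlinarith [(norm_nonneg _).trans hz.2.le]
        gcongr
        · exact infDist_nonneg
        · exact (infDist_le_dist_of_mem hξ).trans_eq (dist_eq_norm ζ ξ)
    _ ≤ 18 * dist ζ z := by
        rw [dist_eq_norm]
        exact mul_sq_norm_sub_le_of_mem_pE hr1 ht.1.le ht.2 hξ1 hζ hz

end PseudoHyperbolic

/-- `cl(W_F) ∩ 𝕊ₙ = F` for the radial union `W_F` of pseudo-hyperbolic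
balls over a nonempty closed `F ⊆ 𝕊ₙ`. -/
theorem closure_WF_inter_sphere (n : ℕ) (r : ℝ) (hr : 0 < r) (hr1 : r < 1)
    (F : Set (Cn n)) (hFS : F ⊆ Sn n) (hFc : IsClosed F) (hFne : F.Nonempty) :
    closure (⋃ t ∈ Set.Ioo (0 : ℝ) 1, ⋃ ζ ∈ F, pE n (t • ζ) r) ∩ Sn n = F := by
  change closure (radialUnion n F r) ∩ Sn n = F
  refine Set.Subset.antisymm ?_ fun ζ hζ ↦
    ⟨mem_closure_radialUnion hr hζ (mem_sphere_zero_iff_norm.mp (hFS hζ)), hFS hζ⟩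
  rintro ζ ⟨hζW, hζS⟩
  have h0 : (1 - r ^ 2) * infDist ζ F ^ 2 ≤ 0 := by
    simpa using mul_sq_infDist_le_of_mem_closure_radialUnion hr1 hFS
      (mem_sphere_zero_iff_norm.mp hζS) hζW
  have hr2 : 0 < 1 - r ^ 2 := by nlinarith
  rw [← hFc.closure_eq, mem_closure_iff_infDist_zero hFne]
  exact pow_eq_zero_iff two_ne_zero |>.mp <|
    le_antisymm (nonpos_of_mul_nonpos_right h0 hr2) (sq_nonneg _)
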